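/- Consider the residual map R(x, s, z) = (Px + Aᵀz + q, −Ax + b − s) with P ∈ ℝ^{n×n} symmetric positive semidefinite, A ∈ ℝ^{m×n}, q ∈ ℝⁿ, b ∈ ℝᵐ. Let x* ∈ ℝⁿ and let s* = (s₀*, s₁*), z* = (z₀*, z₁*) ∈ K_soc^m satisfy ⟨s*, z*⟩ = 0 with s₀* > 0, z₀* > 0. Set λ = s₀*/z₀* and μ⁰ = λ‖R(x*, s*, z*)‖_∞, assumed positive. Let c = s* − λz*, let s⁰ be the unique minimizer over the interior of K_soc^m of (1/2)‖s − c‖² − (μ⁰/2)log(s₀² − ‖s₁‖²), let z⁰ = (s⁰ − c)/λ, and x⁰ = x*. Then ‖R(x⁰, s⁰, z⁰)‖_∞ ≤ (1 + (‖Aᵀ‖_∞ + λ)/(2s₀*)) · ‖R(x*, s*, z*)‖_∞, where ‖Aᵀ‖_∞ is the operator ∞-norm of Aᵀ and ‖·‖_∞ on residuals is the maximum absolute entry of the concatenated vector. -/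

import Mathlib

/-!
Complementarity of `s*, z*` in the second-order cone is an equality case of Cauchy–Schwarz:
both lie on the boundary as mirror images, `z₀* s₁* + s₀* z₁* = 0`, so `c = s* − λz* = (0, 2s₁*)`.
For such `c` the smoothing objective equals `‖s₁ − s₁*‖² + ‖s₁*‖² + (d − μ log d)/2` with
`d = s₀² − ‖s₁‖²`, which is minimal exactly at `s₁ = s₁*`, `d = μ`; hence
`s⁰ = (√(s₀*² + μ⁰), s₁*)`. The warm start thus moves `s*` only in the first coordinate, by
`δ = √(s₀*² + μ⁰) − s₀* ≤ μ⁰/(2s₀*)`, and `z*` by `δ/λ`, changing the residual by at most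
`‖Aᵀ‖_∞ δ/λ + δ`.
-/

open Matrix

/-- The residual map `R(x, s, z) = (Px + Aᵀz + q, −Ax + b − s)` of the primal-dual
pair of conic programs. -/
def resMap (n m : ℕ) (P : Matrix (Fin n) (Fin n) ℝ) (A : Matrix (Fin m) (Fin n) ℝ)
    (q : Fin n → ℝ) (b : Fin m → ℝ) (x : Fin n → ℝ) (s z : Fin m → ℝ) :
    (Fin n → ℝ) × (Fin m → ℝ) :=
  (P.mulVec x + Aᵀ.mulVec z + q, -(A.mulVec x) + b - s)

/-- `‖s₁‖²`, the squared Euclidean norm of the tail `s₁ = (s i)_{i ≥ 1}` of a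
vector `s ∈ ℝ^{p+1}` written as `(s₀, s₁) ∈ ℝ × ℝᵖ`. -/
def socTailSq (p : ℕ) (s : Fin (p + 1) → ℝ) : ℝ := ∑ i : Fin p, (s i.succ) ^ 2

/-- The smoothing objective for the second-order cone `K_soc^{p+1}`:
`f_μ(s) = (1/2)‖s − c‖² − (μ/2) log(s₀² − ‖s₁‖²)`. -/
noncomputable def socObj' (p : ℕ) (μ : ℝ) (c s : Fin (p + 1) → ℝ) : ℝ :=
  (1 / 2) * ∑ i, (s i - c i) ^ 2 - (μ / 2) * Real.log ((s 0) ^ 2 - socTailSq p s)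

open Finset Real

section SecondOrderCone

theorem mul_add_mul_eq_zero_of_sum_mul_eq {ι : Type*} [Fintype ι] {u v : ι → ℝ} {a b : ℝ}
    (hu : ∑ i, u i ^ 2 ≤ a ^ 2) (hv : ∑ i, v i ^ 2 ≤ b ^ 2)
    (huv : ∑ i, u i * v i = -(a * b)) (i : ι) : b * u i + a * v i = 0 := by
  have hexpand : ∑ i, (b * u i + a * v i) ^ 2
      = b ^ 2 * ∑ i, u i ^ 2 + a ^ 2 * ∑ i, v i ^ 2 + 2 * a * b * ∑ i, u i * v i := by
    simp only [mul_sum, ← sum_add_distrib]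
    exact sum_congr rfl fun i _ => by ring
  have hsum : ∑ i, (b * u i + a * v i) ^ 2 = 0 := by
    refine le_antisymm ?_ (sum_nonneg fun i _ => sq_nonneg _)
    rw [hexpand, huv]
    nlinarith [mul_le_mul_of_nonneg_left hu (sq_nonneg b),
      mul_le_mul_of_nonneg_left hv (sq_nonneg a)]
  simpa using (sum_eq_zero_iff_of_nonneg fun i _ => sq_nonneg _).1 hsum i (mem_univ i)

variable {p : ℕ} {s z : Fin (p + 1) → ℝ}

theorem socTailSq_le_sq (hs : √(socTailSq p s) ≤ s 0) : socTailSq p s ≤ s 0 ^ 2 :=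
  (Real.sqrt_le_iff.1 hs).2

theorem sum_succ_mul_succ_eq (hsz : ∑ i, s i * z i = 0) :
    ∑ i : Fin p, s i.succ * z i.succ = -(s 0 * z 0) := by
  rw [Fin.sum_univ_succ] at hsz
  linarith

theorem soc_mul_succ_add_mul_succ_eq_zero (hs : √(socTailSq p s) ≤ s 0)
    (hz : √(socTailSq p z) ≤ z 0) (hsz : ∑ i, s i * z i = 0) (i : Fin p) :
    z 0 * s i.succ + s 0 * z i.succ = 0 :=
  mul_add_mul_eq_zero_of_sum_mul_eq (socTailSq_le_sq hs) (socTailSq_le_sq hz)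
    (sum_succ_mul_succ_eq hsz) i

theorem socTailSq_eq_sq_of_sum_mul_eq_zero (hs : √(socTailSq p s) ≤ s 0)
    (hz : √(socTailSq p z) ≤ z 0) (hz0 : 0 < z 0) (hsz : ∑ i, s i * z i = 0) :
    socTailSq p s = s 0 ^ 2 := by
  have hcross : z 0 * socTailSq p s = -(s 0 * ∑ i : Fin p, s i.succ * z i.succ) := by
    rw [socTailSq, mul_sum, mul_sum, ← sum_neg_distrib]
    refine sum_congr rfl fun i _ => ?_
    linear_combination s i.succ * soc_mul_succ_add_mul_succ_eq_zero hs hz hsz i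
  rw [sum_succ_mul_succ_eq hsz] at hcross
  nlinarith

theorem sub_div_smul_eq_cons_of_sum_mul_eq_zero (hs : √(socTailSq p s) ≤ s 0)
    (hz : √(socTailSq p z) ≤ z 0) (hz0 : 0 < z 0) (hsz : ∑ i, s i * z i = 0) :
    s - (s 0 / z 0) • z = Fin.cons 0 ((2 : ℝ) • Fin.tail s) := by
  refine funext fun i => Fin.cases ?_ (fun j => ?_) i
  · simp [hz0.ne']
  · simp only [Pi.sub_apply, Pi.smul_apply, smul_eq_mul, Fin.cons_succ, Fin.tail]
    field_simp
    linear_combination -soc_mul_succ_add_mul_succ_eq_zero hs hz hsz j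

end SecondOrderCone

section SmoothingObjective

theorem sub_mul_log_lt_sub_mul_log {μ d : ℝ} (hμ : 0 < μ) (hd : 0 < d) (hne : d ≠ μ) :
    μ - μ * log μ < d - μ * log d := by
  have hlog : log d - log μ < d / μ - 1 := by
    rw [← log_div hd.ne' hμ.ne']
    exact log_lt_sub_one_of_pos (div_pos hd hμ) (div_ne_one_of_ne hne)
  have h := mul_lt_mul_of_pos_left hlog hμ
  rw [mul_sub, mul_sub, mul_div_cancel₀ _ hμ.ne'] at h
  linarith

theorem sqrt_sq_add_le_add_div {σ μ : ℝ} (hσ : 0 < σ) (hμ : 0 ≤ μ) :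
    √(σ ^ 2 + μ) ≤ σ + μ / (2 * σ) := by
  refine sqrt_le_iff.2 ⟨by positivity, ?_⟩
  have hexpand : (σ + μ / (2 * σ)) ^ 2 = σ ^ 2 + μ + (μ / (2 * σ)) ^ 2 := by
    field_simp
    ring
  nlinarith [sq_nonneg (μ / (2 * σ))]

variable {p : ℕ}

theorem socObj'_cons_zero_two_smul (μ : ℝ) (w : Fin p → ℝ) (s : Fin (p + 1) → ℝ) :
    socObj' p μ (Fin.cons 0 ((2 : ℝ) • w)) s =
      ∑ i, (s i.succ - w i) ^ 2 + ∑ i, w i ^ 2 +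
        (s 0 ^ 2 - socTailSq p s - μ * log (s 0 ^ 2 - socTailSq p s)) / 2 := by
  have hpar : ∑ i, (s i.succ - 2 * w i) ^ 2
      = 2 * ∑ i, (s i.succ - w i) ^ 2 - socTailSq p s + 2 * ∑ i, w i ^ 2 := by
    rw [socTailSq, mul_sum, mul_sum, ← sum_sub_distrib, ← sum_add_distrib]
    exact sum_congr rfl fun i _ => by ring
  simp only [socObj', Fin.sum_univ_succ, Fin.cons_zero, Fin.cons_succ, Pi.smul_apply,
    smul_eq_mul, sub_zero]
  rw [hpar]
  ring

theorem eq_cons_of_forall_socObj'_le {μ : ℝ} (hμ : 0 < μ) (w : Fin p → ℝ)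
    {s : Fin (p + 1) → ℝ} (hs : √(socTailSq p s) < s 0)
    (hmin : ∀ s' : Fin (p + 1) → ℝ, √(socTailSq p s') < s' 0 →
      socObj' p μ (Fin.cons 0 ((2 : ℝ) • w)) s ≤
        socObj' p μ (Fin.cons 0 ((2 : ℝ) • w)) s') :
    s = Fin.cons √(∑ i, w i ^ 2 + μ) w := by
  set η := √(∑ i, w i ^ 2 + μ) with hη
  have hwnn : 0 ≤ ∑ i, w i ^ 2 := sum_nonneg fun i _ => sq_nonneg _
  have hη_sq : η ^ 2 = ∑ i, w i ^ 2 + μ := sq_sqrt (by positivity)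
  have hcand_tail : socTailSq p (Fin.cons η w) = ∑ i, w i ^ 2 := by
    simp [socTailSq]
  have hcand_int : √(socTailSq p (Fin.cons η w)) < (Fin.cons η w : Fin (p + 1) → ℝ) 0 := by
    rw [hcand_tail, Fin.cons_zero]
    exact sqrt_lt_sqrt hwnn (by linarith)
  have hs0_pos : 0 < s 0 := (sqrt_nonneg _).trans_lt hs
  set d := s 0 ^ 2 - socTailSq p s with hd
  have hd_pos : 0 < d := by linarith [(sqrt_lt' hs0_pos).1 hs]
  set a := ∑ i, (s i.succ - w i) ^ 2 with ha
  have ha_nn : 0 ≤ a := sum_nonneg fun i _ => sq_nonneg _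
  have hcmp : a + (d - μ * log d) / 2 ≤ (μ - μ * log μ) / 2 := by
    have h := hmin _ hcand_int
    rw [socObj'_cons_zero_two_smul, socObj'_cons_zero_two_smul, hcand_tail] at h
    simp only [Fin.cons_zero, Fin.cons_succ, sub_self, hη_sq, add_sub_cancel_left,
      zero_pow two_ne_zero, sum_const_zero, zero_add] at h
    rw [← hd, ← ha] at h
    linarith
  have hdμ : d = μ := by
    by_contra hne
    linarith [sub_mul_log_lt_sub_mul_log hμ hd_pos hne]
  have ha0 : a = 0 := le_antisymm (by rw [hdμ] at hcmp; linarith) ha_nn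
  have htail : ∀ i, s i.succ = w i := fun i => by
    have := (sum_eq_zero_iff_of_nonneg fun i _ => sq_nonneg _).1 ha0 i (mem_univ i)
    simpa [sub_eq_zero] using this
  have hhead : s 0 = η := by
    have hsoc : socTailSq p s = ∑ i, w i ^ 2 := sum_congr rfl fun i _ => by rw [htail i]
    rw [← sqrt_sq hs0_pos.le, hη]
    congr 1
    linarith
  rw [← Fin.cons_self_tail s, hhead]
  exact congrArg _ (funext htail)

theorem eq_cons_of_forall_socObj'_sub_div_smul_le {μ : ℝ} {s z s₀ : Fin (p + 1) → ℝ}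
    (hs : √(socTailSq p s) ≤ s 0) (hz : √(socTailSq p z) ≤ z 0) (hz0 : 0 < z 0)
    (hsz : ∑ i, s i * z i = 0) (hμ : 0 < μ) (hs₀ : √(socTailSq p s₀) < s₀ 0)
    (hmin : ∀ s' : Fin (p + 1) → ℝ, √(socTailSq p s') < s' 0 →
      socObj' p μ (s - (s 0 / z 0) • z) s₀ ≤ socObj' p μ (s - (s 0 / z 0) • z) s') :
    s₀ = Fin.cons √(s 0 ^ 2 + μ) (Fin.tail s) := by
  rw [sub_div_smul_eq_cons_of_sum_mul_eq_zero hs hz hz0 hsz] at hmin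
  rw [eq_cons_of_forall_socObj'_le hμ _ hs₀ hmin]
  congr 3
  exact socTailSq_eq_sq_of_sum_mul_eq_zero hs hz hz0 hsz

end SmoothingObjective

theorem norm_cons_tail_sub_self {p : ℕ} (a : ℝ) (v : Fin (p + 1) → ℝ) :
    ‖(Fin.cons a (Fin.tail v) : Fin (p + 1) → ℝ) - v‖ = |a - v 0| := by
  have hsingle : (Fin.cons a (Fin.tail v) : Fin (p + 1) → ℝ) - v = Pi.single 0 (a - v 0) := by
    refine funext fun i => Fin.cases ?_ (fun j => ?_) i <;> simp [Fin.tail]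
  rw [hsingle, Pi.norm_single, Real.norm_eq_abs]

section Residual

theorem sup'_sum_abs_nonneg {ι κ : Type*} [Fintype ι] [Fintype κ]
    (hκ : (univ : Finset κ).Nonempty) (A : Matrix ι κ ℝ) :
    0 ≤ univ.sup' hκ fun j => ∑ i, |A i j| :=
  le_sup'_of_le _ hκ.choose_spec (sum_nonneg fun _ _ => abs_nonneg _)

theorem norm_transpose_mulVec_le {ι κ : Type*} [Fintype ι] [Fintype κ]
    (hκ : (univ : Finset κ).Nonempty) (A : Matrix ι κ ℝ) (v : ι → ℝ) :
    ‖Aᵀ *ᵥ v‖ ≤ (univ.sup' hκ fun j => ∑ i, |A i j|) * ‖v‖ := by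
  refine (pi_norm_le_iff_of_nonneg
    (mul_nonneg (sup'_sum_abs_nonneg hκ A) (norm_nonneg v))).2 fun j => ?_
  calc ‖(Aᵀ *ᵥ v) j‖ = |∑ i, A i j * v i| := rfl
    _ ≤ ∑ i, |A i j| * ‖v‖ := by
      refine (abs_sum_le_sum_abs _ _).trans (sum_le_sum fun i _ => ?_)
      rw [abs_mul]
      exact mul_le_mul_of_nonneg_left (norm_le_pi_norm v i) (abs_nonneg _)
    _ = (∑ i, |A i j|) * ‖v‖ := (sum_mul ..).symm
    _ ≤ _ := mul_le_mul_of_nonneg_right (le_sup' (fun j => ∑ i, |A i j|) (mem_univ j))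
      (norm_nonneg v)

variable {n m : ℕ} (P : Matrix (Fin n) (Fin n) ℝ) (A : Matrix (Fin m) (Fin n) ℝ)
  (q : Fin n → ℝ) (b : Fin m → ℝ) (x : Fin n → ℝ) (s z s' z' : Fin m → ℝ)

theorem norm_resMap_fst_le (hn : (univ : Finset (Fin n)).Nonempty) :
    ‖(resMap n m P A q b x s' z').1‖ ≤
      ‖(resMap n m P A q b x s z).1‖ +
        (univ.sup' hn fun j => ∑ i, |A i j|) * ‖z' - z‖ := by
  have hdiff :
      (resMap n m P A q b x s' z').1 - (resMap n m P A q b x s z).1 = Aᵀ *ᵥ (z' - z) := by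
    simp only [resMap, mulVec_sub]
    abel
  calc _ ≤ _ := norm_le_insert' _ (resMap n m P A q b x s z).1
    _ ≤ _ := by rw [hdiff]; gcongr; exact norm_transpose_mulVec_le hn A _

theorem norm_resMap_snd_le :
    ‖(resMap n m P A q b x s' z').2‖ ≤ ‖(resMap n m P A q b x s z).2‖ + ‖s' - s‖ := by
  have hdiff : (resMap n m P A q b x s' z').2 - (resMap n m P A q b x s z).2 = -(s' - s) := by
    simp only [resMap]
    abel
  calc _ ≤ _ := norm_le_insert' _ (resMap n m P A q b x s z).2
    _ = _ := by rw [hdiff, norm_neg]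

theorem max_norm_resMap_le (hn : (univ : Finset (Fin n)).Nonempty) :
    max ‖(resMap n m P A q b x s' z').1‖ ‖(resMap n m P A q b x s' z').2‖ ≤
      max ‖(resMap n m P A q b x s z).1‖ ‖(resMap n m P A q b x s z).2‖ +
        (univ.sup' hn fun j => ∑ i, |A i j|) * ‖z' - z‖ + ‖s' - s‖ := by
  apply max_le
  · linarith [norm_resMap_fst_le P A q b x s z s' z' hn, norm_nonneg (s' - s),
      le_max_left ‖(resMap n m P A q b x s z).1‖ ‖(resMap n m P A q b x s z).2‖]
  · linarith [norm_resMap_snd_le P A q b x s z s' z',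
      mul_nonneg (sup'_sum_abs_nonneg hn A) (norm_nonneg (z' - z)),
      le_max_right ‖(resMap n m P A q b x s z).1‖ ‖(resMap n m P A q b x s z).2‖]

end Residual

theorem stmt14_general (n p : ℕ) (hnn : (Finset.univ : Finset (Fin n)).Nonempty)
    (P : Matrix (Fin n) (Fin n) ℝ)
    (A : Matrix (Fin (p + 1)) (Fin n) ℝ) (q : Fin n → ℝ) (b : Fin (p + 1) → ℝ)
    (xstar : Fin n → ℝ) (sstar zstar : Fin (p + 1) → ℝ)
    (hsK : Real.sqrt (socTailSq p sstar) ≤ sstar 0)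
    (hzK : Real.sqrt (socTailSq p zstar) ≤ zstar 0)
    (hcomp : ∑ i, sstar i * zstar i = 0)
    (hs0 : 0 < sstar 0) (hz0 : 0 < zstar 0)
    (lam : ℝ) (hlamdef : lam = sstar 0 / zstar 0)
    (μ0 : ℝ)
    (hμ0def : μ0 = lam * max ‖(resMap n (p + 1) P A q b xstar sstar zstar).1‖
      ‖(resMap n (p + 1) P A q b xstar sstar zstar).2‖)
    (hμ0 : 0 < μ0)
    (c : Fin (p + 1) → ℝ) (hcdef : c = sstar - lam • zstar)
    (s0 : Fin (p + 1) → ℝ)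
    (hs0int : Real.sqrt (socTailSq p s0) < s0 0)
    (hs0min : ∀ s : Fin (p + 1) → ℝ, Real.sqrt (socTailSq p s) < s 0 →
      socObj' p μ0 c s0 ≤ socObj' p μ0 c s)
    (z0 : Fin (p + 1) → ℝ) (hz0def : z0 = lam⁻¹ • (s0 - c)) :
    max ‖(resMap n (p + 1) P A q b xstar s0 z0).1‖
        ‖(resMap n (p + 1) P A q b xstar s0 z0).2‖ ≤
      (1 + ((Finset.univ.sup' hnn fun j => ∑ i, |A i j|) + lam) / (2 * sstar 0)) *
        max ‖(resMap n (p + 1) P A q b xstar sstar zstar).1‖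
          ‖(resMap n (p + 1) P A q b xstar sstar zstar).2‖ := by
  set r := max ‖(resMap n (p + 1) P A q b xstar sstar zstar).1‖
    ‖(resMap n (p + 1) P A q b xstar sstar zstar).2‖
  set σ := sstar 0
  have hlam : 0 < lam := hlamdef ▸ div_pos hs0 hz0
  have hs0_eq : s0 = Fin.cons √(σ ^ 2 + μ0) (Fin.tail sstar) :=
    eq_cons_of_forall_socObj'_sub_div_smul_le hsK hzK hz0 hcomp hμ0 hs0int
      (hlamdef ▸ hcdef ▸ hs0min)
  have hs_diff : ‖s0 - sstar‖ ≤ lam * (r / (2 * σ)) := by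
    rw [hs0_eq, norm_cons_tail_sub_self,
      abs_of_nonneg (sub_nonneg.2 (le_sqrt_of_sq_le (by linarith)))]
    calc √(σ ^ 2 + μ0) - σ ≤ μ0 / (2 * σ) := by
          linarith [sqrt_sq_add_le_add_div hs0 hμ0.le]
      _ = lam * (r / (2 * σ)) := by rw [hμ0def, mul_div_assoc]
  have hz_diff : ‖z0 - zstar‖ ≤ r / (2 * σ) := by
    have hz : z0 - zstar = lam⁻¹ • (s0 - sstar) := by
      rw [hz0def, hcdef, smul_sub, smul_sub, smul_sub, smul_smul, inv_mul_cancel₀ hlam.ne',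
        one_smul]
      abel
    rw [hz, norm_smul, Real.norm_of_nonneg (inv_nonneg.2 hlam.le), inv_mul_le_iff₀ hlam]
    exact hs_diff
  calc _ ≤ r + (univ.sup' hnn fun j => ∑ i, |A i j|) * ‖z0 - zstar‖ + ‖s0 - sstar‖ :=
        max_norm_resMap_le P A q b xstar sstar zstar s0 z0 hnn
    _ ≤ r + (univ.sup' hnn fun j => ∑ i, |A i j|) * (r / (2 * σ)) + lam * (r / (2 * σ)) := by
        gcongr
        exact sup'_sum_abs_nonneg hnn A
    _ = _ := by field_simp; ring

/-- Theorem 2 for the second-order cone: given a complementary pair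
`s* = (s₀*, s₁*), z* = (z₀*, z₁*) ∈ K_soc^m` (`m = p + 1`) with `s₀* > 0, z₀* > 0`,
`λ = s₀*/z₀*` and `μ⁰ = λ‖R(x*, s*, z*)‖_∞ > 0`, the warmstart `s⁰` (the minimizer
of the smoothing objective with parameter `μ⁰` at `c = s* − λz*`),
`z⁰ = (s⁰ − c)/λ`, `x⁰ = x*` satisfies
`‖R(x⁰, s⁰, z⁰)‖_∞ ≤ (1 + (‖Aᵀ‖_∞ + λ)/(2s₀*))·‖R(x*, s*, z*)‖_∞`, where `‖Aᵀ‖_∞`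
is the maximum absolute column sum of `A` and the `∞`-norm of a residual is the
maximum absolute entry of the concatenated vector. -/
theorem stmt14 (n p : ℕ) (hnn : (Finset.univ : Finset (Fin n)).Nonempty)
    (P : Matrix (Fin n) (Fin n) ℝ) (hP : P.PosSemidef)
    (A : Matrix (Fin (p + 1)) (Fin n) ℝ) (q : Fin n → ℝ) (b : Fin (p + 1) → ℝ)
    (xstar : Fin n → ℝ) (sstar zstar : Fin (p + 1) → ℝ)
    (hsK : Real.sqrt (socTailSq p sstar) ≤ sstar 0)
    (hzK : Real.sqrt (socTailSq p zstar) ≤ zstar 0)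
    (hcomp : ∑ i, sstar i * zstar i = 0)
    (hs0 : 0 < sstar 0) (hz0 : 0 < zstar 0)
    (lam : ℝ) (hlamdef : lam = sstar 0 / zstar 0)
    (μ0 : ℝ)
    (hμ0def : μ0 = lam * max ‖(resMap n (p + 1) P A q b xstar sstar zstar).1‖
      ‖(resMap n (p + 1) P A q b xstar sstar zstar).2‖)
    (hμ0 : 0 < μ0)
    (c : Fin (p + 1) → ℝ) (hcdef : c = sstar - lam • zstar)
    (s0 : Fin (p + 1) → ℝ)
    (hs0int : Real.sqrt (socTailSq p s0) < s0 0)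
    (hs0min : ∀ s : Fin (p + 1) → ℝ, Real.sqrt (socTailSq p s) < s 0 →
      socObj' p μ0 c s0 ≤ socObj' p μ0 c s)
    (z0 : Fin (p + 1) → ℝ) (hz0def : z0 = lam⁻¹ • (s0 - c)) :
    max ‖(resMap n (p + 1) P A q b xstar s0 z0).1‖
        ‖(resMap n (p + 1) P A q b xstar s0 z0).2‖ ≤
      (1 + ((Finset.univ.sup' hnn fun j => ∑ i, |A i j|) + lam) / (2 * sstar 0)) *
        max ‖(resMap n (p + 1) P A q b xstar sstar zstar).1‖
          ‖(resMap n (p + 1) P A q b xstar sstar zstar).2‖ :=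
  stmt14_general n p hnn P A q b xstar sstar zstar hsK hzK hcomp hs0 hz0 lam hlamdef μ0 hμ0def hμ0 c
    hcdef s0 hs0int hs0min z0 hz0def
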